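/- arXiv:2201.04985 — 5 statements merged into one kernel-verified Lean document; each statement's English description precedes it below -/
import Mathlib

section
/- For the min-max regret problem with interval uncertainty, for any fixed x ∈ X the scenario c^{rwc}(x) defined by c^{rwc}_i(x) = c̲_i + d_i if x_i = 1 and c^{rwc}_i(x) = c̲_i if x_i = 0 attains the maximum regret, i.e., max_{c∈U_I} (c^T x − opt(c)) = c^{rwc}(x)^T x − opt(c^{rwc}(x)), where opt(c) = min_{y∈X} c^T y. -/
/-- For min-max regret with interval uncertainty, the scenario `c^rwc(x)`
(upper bound on chosen items, lower bound elsewhere) attains the maximum regret. -/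
theorem stmt_2 (n : ℕ) (𝒳 : Finset (Finset (Fin n))) (h𝒳 : 𝒳.Nonempty)
    (cl d : Fin n → ℝ) (hcl : ∀ i, 0 ≤ cl i) (hd : ∀ i, 0 ≤ d i)
    (S : Finset (Fin n)) (hS : S ∈ 𝒳) :
    sSup {r : ℝ | ∃ c : Fin n → ℝ, (∀ i, cl i ≤ c i ∧ c i ≤ cl i + d i) ∧
        r = ∑ i ∈ S, c i - 𝒳.inf' h𝒳 (fun T => ∑ i ∈ T, c i)}
      = ∑ i ∈ S, (cl i + d i)
        - 𝒳.inf' h𝒳 (fun T => ∑ i ∈ T, (if i ∈ S then cl i + d i else cl i)) := by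
  set cs : Fin n → ℝ := fun i => if i ∈ S then cl i + d i else cl i with hcs
  have hsumS : ∑ i ∈ S, cs i = ∑ i ∈ S, (cl i + d i) :=
    Finset.sum_congr rfl fun i hi => by simp [hcs, hi]
  have htarget : (∑ i ∈ S, (cl i + d i)
        - 𝒳.inf' h𝒳 (fun T => ∑ i ∈ T, (if i ∈ S then cl i + d i else cl i)))
      = ∑ i ∈ S, cs i - 𝒳.inf' h𝒳 (fun T => ∑ i ∈ T, cs i) := by
    rw [hsumS]
  have hcsint : ∀ i, cl i ≤ cs i ∧ cs i ≤ cl i + d i := by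
    intro i
    by_cases hi : i ∈ S <;> simp [hcs, hi, hd i]
  have hbound : ∀ c : Fin n → ℝ, (∀ i, cl i ≤ c i ∧ c i ≤ cl i + d i) →
      ∑ i ∈ S, c i - 𝒳.inf' h𝒳 (fun T => ∑ i ∈ T, c i)
        ≤ ∑ i ∈ S, cs i - 𝒳.inf' h𝒳 (fun T => ∑ i ∈ T, cs i) := by
    intro c hc
    obtain ⟨T, hT, hTmin⟩ := 𝒳.exists_mem_eq_inf' h𝒳 (fun T => ∑ i ∈ T, c i)
    have h2 : 𝒳.inf' h𝒳 (fun T => ∑ i ∈ T, cs i) ≤ ∑ i ∈ T, cs i :=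
      Finset.inf'_le _ hT
    have hdecS : ∑ i ∈ S ∩ T, c i + ∑ i ∈ S \ T, c i = ∑ i ∈ S, c i :=
      Finset.sum_inter_add_sum_sdiff S T c
    have hdecT : ∑ i ∈ T ∩ S, c i + ∑ i ∈ T \ S, c i = ∑ i ∈ T, c i :=
      Finset.sum_inter_add_sum_sdiff T S c
    have hdecS' : ∑ i ∈ S ∩ T, cs i + ∑ i ∈ S \ T, cs i = ∑ i ∈ S, cs i :=
      Finset.sum_inter_add_sum_sdiff S T cs
    have hdecT' : ∑ i ∈ T ∩ S, cs i + ∑ i ∈ T \ S, cs i = ∑ i ∈ T, cs i :=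
      Finset.sum_inter_add_sum_sdiff T S cs
    have hint : ∑ i ∈ S ∩ T, c i = ∑ i ∈ T ∩ S, c i := by rw [Finset.inter_comm]
    have hint' : ∑ i ∈ S ∩ T, cs i = ∑ i ∈ T ∩ S, cs i := by rw [Finset.inter_comm]
    have hA : ∑ i ∈ S \ T, c i ≤ ∑ i ∈ S \ T, cs i := by
      apply Finset.sum_le_sum
      intro i hi
      have hiS : i ∈ S := (Finset.mem_sdiff.mp hi).1
      simpa [hcs, hiS] using (hc i).2
    have hB : ∑ i ∈ T \ S, cs i ≤ ∑ i ∈ T \ S, c i := by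
      apply Finset.sum_le_sum
      intro i hi
      have hiS : i ∉ S := (Finset.mem_sdiff.mp hi).2
      simpa [hcs, hiS] using (hc i).1
    have h1 : 𝒳.inf' h𝒳 (fun T => ∑ i ∈ T, c i) = ∑ i ∈ T, c i := hTmin
    linarith
  have hmem : (∑ i ∈ S, cs i - 𝒳.inf' h𝒳 (fun T => ∑ i ∈ T, cs i)) ∈
      {r : ℝ | ∃ c : Fin n → ℝ, (∀ i, cl i ≤ c i ∧ c i ≤ cl i + d i) ∧
        r = ∑ i ∈ S, c i - 𝒳.inf' h𝒳 (fun T => ∑ i ∈ T, c i)} :=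
    ⟨cs, hcsint, rfl⟩
  rw [htarget]
  apply le_antisymm
  · apply csSup_le ⟨_, hmem⟩
    rintro r ⟨c, hc, rfl⟩
    exact hbound c hc
  · apply le_csSup
    · exact ⟨_, fun r hr => by obtain ⟨c, hc, rfl⟩ := hr; exact hbound c hc⟩
    · exact hmem
end

section
/- The min-max regret problem under interval uncertainty can be rewritten as a min-max over two feasible solutions: min_{x∈X} max_{c∈U_I} (c^T x − opt(c)) = min_{x∈X} max_{y∈X} ( ∑_i (c̲_i + d_i) x_i − ∑_i (c̲_i + d_i x_i) y_i ). -/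
/-- The min-max regret problem under interval uncertainty rewritten as a
min-max over two feasible solutions. -/
theorem stmt_3 (n : ℕ) (𝒳 : Finset (Finset (Fin n))) (h𝒳 : 𝒳.Nonempty)
    (cl d : Fin n → ℝ) (hcl : ∀ i, 0 ≤ cl i) (hd : ∀ i, 0 ≤ d i) :
    𝒳.inf' h𝒳 (fun S => sSup {r : ℝ | ∃ c : Fin n → ℝ,
        (∀ i, cl i ≤ c i ∧ c i ≤ cl i + d i) ∧
        r = ∑ i ∈ S, c i - 𝒳.inf' h𝒳 (fun T => ∑ i ∈ T, c i)})
      = 𝒳.inf' h𝒳 (fun S => 𝒳.sup' h𝒳 (fun T =>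
          ∑ i ∈ S, (cl i + d i) - ∑ i ∈ T, (cl i + if i ∈ S then d i else 0))) := by
  have key : ∀ S : Finset (Fin n),
      sSup {r : ℝ | ∃ c : Fin n → ℝ,
        (∀ i, cl i ≤ c i ∧ c i ≤ cl i + d i) ∧
        r = ∑ i ∈ S, c i - 𝒳.inf' h𝒳 (fun T => ∑ i ∈ T, c i)}
      = 𝒳.sup' h𝒳 (fun T =>
          ∑ i ∈ S, (cl i + d i) - ∑ i ∈ T, (cl i + if i ∈ S then d i else 0)) := by
    intro S
    set cs : Fin n → ℝ := fun i => cl i + if i ∈ S then d i else 0 with hcs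
    have hadm : ∀ i, cl i ≤ cs i ∧ cs i ≤ cl i + d i := by
      intro i
      constructor
      · simp only [hcs]
        split <;> [linarith [hd i]; linarith]
      · simp only [hcs]
        split <;> [linarith; linarith [hd i]]
    have hSsum : ∑ i ∈ S, cs i = ∑ i ∈ S, (cl i + d i) :=
      Finset.sum_congr rfl (fun i hi => by simp [hcs, hi])
    set M : ℝ := 𝒳.sup' h𝒳 (fun T =>
        ∑ i ∈ S, (cl i + d i) - ∑ i ∈ T, (cl i + if i ∈ S then d i else 0)) with hM
    -- key inequality for any admissible c and any T
    have hbound : ∀ c : Fin n → ℝ, (∀ i, cl i ≤ c i ∧ c i ≤ cl i + d i) →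
        ∀ T, ∑ i ∈ S, c i - ∑ i ∈ T, c i
          ≤ ∑ i ∈ S, (cl i + d i) - ∑ i ∈ T, cs i := by
      intro c hc T
      have h1 : ∑ i ∈ S, (c i - cs i) = ∑ i ∈ S, c i - ∑ i ∈ S, (cl i + d i) := by
        rw [Finset.sum_sub_distrib, hSsum]
      have h2 : ∑ i ∈ T, (c i - cs i) = ∑ i ∈ T, c i - ∑ i ∈ T, cs i := by
        rw [Finset.sum_sub_distrib]
      have hnonpos : ∀ i ∈ S, c i - cs i ≤ 0 := by
        intro i hi
        have := (hc i).2
        simp only [hcs, hi, if_pos]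
        linarith
      have hnonneg : ∀ i, i ∉ S → 0 ≤ c i - cs i := by
        intro i hi
        have := (hc i).1
        simp only [hcs, hi, if_neg, not_false_iff]
        simpa using this
      have hA : ∑ i ∈ S, (c i - cs i) ≤ ∑ i ∈ S ∩ T, (c i - cs i) := by
        rw [← Finset.sum_inter_add_sum_sdiff S T (fun i => c i - cs i)]
        have : ∑ i ∈ S \ T, (c i - cs i) ≤ 0 :=
          Finset.sum_nonpos (fun i hi => hnonpos i (Finset.mem_sdiff.mp hi).1)
        linarith
      have hB : ∑ i ∈ S ∩ T, (c i - cs i) ≤ ∑ i ∈ T, (c i - cs i) := by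
        rw [Finset.inter_comm, ← Finset.sum_inter_add_sum_sdiff T S (fun i => c i - cs i)]
        have : 0 ≤ ∑ i ∈ T \ S, (c i - cs i) :=
          Finset.sum_nonneg (fun i hi => hnonneg i (Finset.mem_sdiff.mp hi).2)
        linarith
      have h3 : ∑ i ∈ S, (c i - cs i) ≤ ∑ i ∈ T, (c i - cs i) := le_trans hA hB
      rw [h1, h2] at h3
      linarith
    -- M equals the regret of the worst-case scenario cs
    obtain ⟨T0, hT0, hT0eq⟩ := Finset.exists_mem_eq_inf' h𝒳 (fun T => ∑ i ∈ T, cs i)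
    have hMeq : M = ∑ i ∈ S, cs i - 𝒳.inf' h𝒳 (fun T => ∑ i ∈ T, cs i) := by
      apply le_antisymm
      · apply Finset.sup'_le
        intro T hT
        have := Finset.inf'_le (fun T => ∑ i ∈ T, cs i) hT
        rw [hSsum]
        simp only [hcs] at this ⊢
        linarith
      · rw [hT0eq, hSsum]
        exact Finset.le_sup' (fun T =>
          ∑ i ∈ S, (cl i + d i) - ∑ i ∈ T, (cl i + if i ∈ S then d i else 0)) hT0
    have hMmem : M ∈ {r : ℝ | ∃ c : Fin n → ℝ,
        (∀ i, cl i ≤ c i ∧ c i ≤ cl i + d i) ∧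
        r = ∑ i ∈ S, c i - 𝒳.inf' h𝒳 (fun T => ∑ i ∈ T, c i)} :=
      ⟨cs, hadm, hMeq⟩
    have hub : ∀ r ∈ {r : ℝ | ∃ c : Fin n → ℝ,
        (∀ i, cl i ≤ c i ∧ c i ≤ cl i + d i) ∧
        r = ∑ i ∈ S, c i - 𝒳.inf' h𝒳 (fun T => ∑ i ∈ T, c i)}, r ≤ M := by
      rintro r ⟨c, hc, rfl⟩
      obtain ⟨T1, hT1, hT1eq⟩ := Finset.exists_mem_eq_inf' h𝒳 (fun T => ∑ i ∈ T, c i)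
      rw [hT1eq]
      calc ∑ i ∈ S, c i - ∑ i ∈ T1, c i
          ≤ ∑ i ∈ S, (cl i + d i) - ∑ i ∈ T1, cs i := hbound c hc T1
        _ ≤ M := Finset.le_sup' (fun T =>
            ∑ i ∈ S, (cl i + d i) - ∑ i ∈ T, (cl i + if i ∈ S then d i else 0)) hT1
    apply le_antisymm
    · exact csSup_le ⟨M, hMmem⟩ hub
    · exact le_csSup ⟨M, hub⟩ hMmem
  exact Finset.inf'_congr h𝒳 rfl (fun S _ => key S)
end

section
/- For the min-max selection problem under continuous budgeted uncertainty, the worst case over U_B^Γ for a fixed x equals min over π ≥ 0 of (∑_i c̲_i x_i + Γπ + ∑_i [d_i x_i − π]_+), and this inner minimum over π is attained at some π in the finite set P = {0} ∪ {d_i : i ∈ [n]}. -/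
set_option maxHeartbeats 1000000

-- weak duality
lemma weak_dual (n : ℕ) (a : Fin n → ℝ) (ha : ∀ i, 0 ≤ a i) (Γ : ℝ)
    (δ : Fin n → ℝ) (hδ : ∀ i, 0 ≤ δ i ∧ δ i ≤ 1) (hsum : (∑ i, δ i) ≤ Γ)
    (π : ℝ) (hπ : 0 ≤ π) :
    ∑ i, a i * δ i ≤ Γ * π + ∑ i, max (a i - π) 0 := by
  have h1 : ∑ i, a i * δ i = ∑ i, (a i - π) * δ i + π * ∑ i, δ i := by
    rw [Finset.mul_sum, ← Finset.sum_add_distrib]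
    congr 1; ext i; ring
  rw [h1]
  have h2 : ∑ i, (a i - π) * δ i ≤ ∑ i, max (a i - π) 0 := by
    apply Finset.sum_le_sum
    intro i _
    rcases le_or_gt (a i - π) 0 with h | h
    · calc (a i - π) * δ i ≤ 0 := mul_nonpos_of_nonpos_of_nonneg h (hδ i).1
        _ ≤ max (a i - π) 0 := le_max_right _ _
    · calc (a i - π) * δ i ≤ (a i - π) * 1 := by
            exact mul_le_mul_of_nonneg_left (hδ i).2 h.le
        _ = a i - π := mul_one _
        _ ≤ max (a i - π) 0 := le_max_left _ _
  have h3 : π * ∑ i, δ i ≤ Γ * π := by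
    rw [mul_comm Γ π]; exact mul_le_mul_of_nonneg_left hsum hπ
  linarith

lemma strong_dual (n : ℕ) (a : Fin n → ℝ) (ha : ∀ i, 0 ≤ a i) (Γ : ℝ) (hΓ0 : 0 ≤ Γ) :
    ∃ π : ℝ, 0 ≤ π ∧ (π = 0 ∨ ∃ i, π = a i ∧ 0 < π) ∧
      ∃ δ : Fin n → ℝ, (∀ i, 0 ≤ δ i ∧ δ i ≤ 1) ∧ (∑ i, δ i) ≤ Γ ∧
        ∑ i, a i * δ i = Γ * π + ∑ i, max (a i - π) 0 := by
  classical
  set P0 : Finset (Fin n) := Finset.univ.filter (fun i => 0 < a i) with hP0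
  by_cases hA : (P0.card : ℝ) ≤ Γ
  · -- π = 0, δ = indicator of P0
    refine ⟨0, le_refl _, Or.inl rfl, fun i => if 0 < a i then 1 else 0, ?_, ?_, ?_⟩
    · intro i; by_cases h : 0 < a i <;> simp [h]
    · have h : (∑ i, (if 0 < a i then (1:ℝ) else 0)) = P0.card := by
        simp [Finset.sum_boole, hP0]
      rw [h]; exact hA
    · have h1 : ∀ i, a i * (if 0 < a i then (1:ℝ) else 0) = a i := by
        intro i
        by_cases h : 0 < a i
        · simp [h]
        · have : a i = 0 := le_antisymm (not_lt.mp h) (ha i)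
          simp [this]
      have h2 : ∀ i, max (a i - 0) 0 = a i := by
        intro i; simp [max_eq_left (ha i)]
      simp only [h1, h2, mul_zero, zero_add]
  · -- Γ < card P0
    push_neg at hA
    set V : Finset ℝ := (Finset.univ.image a).filter (fun v => 0 < v) with hV
    have hP0ne : P0.Nonempty := Finset.card_pos.mp
      (Nat.cast_pos.mp (lt_of_le_of_lt hΓ0 hA))
    have hmemV : ∀ i, 0 < a i → a i ∈ V := by
      intro i hi
      simp only [hV, Finset.mem_filter, Finset.mem_image]
      exact ⟨⟨i, Finset.mem_univ i, rfl⟩, hi⟩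
    have hVpos : ∀ v ∈ V, 0 < v := fun v hv => (Finset.mem_filter.mp hv).2
    have hVne : V.Nonempty := by
      obtain ⟨i, hi⟩ := hP0ne
      exact ⟨a i, hmemV i (Finset.mem_filter.mp hi).2⟩
    set T : Finset ℝ := V.filter
        (fun v => ((Finset.univ.filter (fun i => v < a i)).card : ℝ) ≤ Γ) with hT
    have hTne : T.Nonempty := by
      refine ⟨V.max' hVne, Finset.mem_filter.mpr ⟨V.max'_mem hVne, ?_⟩⟩
      have h : (Finset.univ.filter (fun i => V.max' hVne < a i)) = ∅ := by
        rw [Finset.filter_eq_empty_iff]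
        intro i _ hlt
        have haiV : a i ∈ V :=
          hmemV i (lt_trans (hVpos _ (V.max'_mem hVne)) hlt)
        exact absurd (V.le_max' _ haiV) (not_le.mpr hlt)
      rw [h]; simpa using hΓ0
    set π := T.min' hTne with hπdef
    have hπT : π ∈ T := T.min'_mem hTne
    have hπV : π ∈ V := (Finset.mem_filter.mp hπT).1
    have hπpos : 0 < π := hVpos _ hπV
    have hπa : ∃ i, a i = π := by
      have := (Finset.mem_filter.mp hπV).1
      obtain ⟨i, _, hi⟩ := Finset.mem_image.mp this
      exact ⟨i, hi⟩
    set F1 : Finset (Fin n) := Finset.univ.filter (fun i => π < a i) with hF1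
    set E : Finset (Fin n) := Finset.univ.filter (fun i => a i = π) with hE
    have hc : (F1.card : ℝ) ≤ Γ := (Finset.mem_filter.mp hπT).2
    -- Γ ≤ card {i : π ≤ a i} = F1.card + E.card
    have hFE : Finset.univ.filter (fun i => π ≤ a i) = F1 ∪ E := by
      ext i
      simp only [Finset.mem_filter, Finset.mem_univ, true_and, Finset.mem_union, hF1, hE]
      constructor
      · intro h; rcases lt_or_eq_of_le h with h' | h'
        · exact Or.inl h'
        · exact Or.inr h'.symm
      · rintro (h | h); exacts [h.le, h.ge]
    have hdisj : Disjoint F1 E := by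
      rw [Finset.disjoint_left]
      intro i h1 h2
      simp only [hF1, hE, Finset.mem_filter] at h1 h2
      exact absurd h2.2 (ne_of_gt h1.2)
    have hge : Γ ≤ ((Finset.univ.filter (fun i => π ≤ a i)).card : ℝ) := by
      by_contra hcon
      push_neg at hcon
      set V' : Finset ℝ := V.filter (fun v => v < π) with hV'
      rcases V'.eq_empty_or_nonempty with hV'e | hV'ne
      · -- all of V is ≥ π, so P0 ⊆ {π ≤ a}
        have hsub : P0 ⊆ Finset.univ.filter (fun i => π ≤ a i) := by
          intro i hi
          have hai : 0 < a i := (Finset.mem_filter.mp hi).2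
          have haiV := hmemV i hai
          have : ¬ a i < π := by
            intro hlt
            have : a i ∈ V' := Finset.mem_filter.mpr ⟨haiV, hlt⟩
            simp [hV'e] at this
          exact Finset.mem_filter.mpr ⟨Finset.mem_univ i, not_lt.mp this⟩
        have := Finset.card_le_card hsub
        have : (P0.card : ℝ) ≤ ((Finset.univ.filter (fun i => π ≤ a i)).card : ℝ) :=
          Nat.cast_le.mpr this
        linarith
      · set v' := V'.max' hV'ne with hv'def
        have hv'V' : v' ∈ V' := V'.max'_mem hV'ne
        have hv'V : v' ∈ V := (Finset.mem_filter.mp hv'V').1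
        have hv'lt : v' < π := (Finset.mem_filter.mp hv'V').2
        have heq : Finset.univ.filter (fun i => v' < a i)
            = Finset.univ.filter (fun i => π ≤ a i) := by
          ext i
          simp only [Finset.mem_filter, Finset.mem_univ, true_and]
          constructor
          · intro h
            by_contra h'
            push_neg at h'
            have haiV : a i ∈ V := hmemV i (lt_trans (hVpos _ hv'V) h)
            have : a i ∈ V' := Finset.mem_filter.mpr ⟨haiV, h'⟩
            exact absurd (V'.le_max' _ this) (not_le.mpr h)
          · intro h; exact lt_of_lt_of_le hv'lt h
        have hv'T : v' ∈ T := by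
          refine Finset.mem_filter.mpr ⟨hv'V, ?_⟩
          rw [heq]; exact hcon.le
        exact absurd (T.min'_le _ hv'T) (not_le.mpr hv'lt)
    rw [hFE, Finset.card_union_of_disjoint hdisj, Nat.cast_add] at hge
    -- construct δ
    set e : ℝ := (E.card : ℝ) with hedef
    set t : ℝ := Γ - (F1.card : ℝ) with htdef
    have ht0 : 0 ≤ t := by simp [htdef]; linarith
    have hte : t ≤ e := by simp [htdef, hedef]; linarith
    have hett : e * (t / e) = t := by
      rcases eq_or_ne e 0 with h | h
      · have : t = 0 := le_antisymm (h ▸ hte) ht0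
        simp [h, this]
      · field_simp
    set δ : Fin n → ℝ := fun i =>
      if π < a i then 1 else if a i = π then t / e else 0 with hδdef
    clear_value δ t e E F1 π T V
    have hEpos : ∀ i, a i = π → (0:ℝ) < e := by
      intro i hi
      have : i ∈ E := by rw [hE]; exact Finset.mem_filter.mpr ⟨Finset.mem_univ i, hi⟩
      have := Finset.card_pos.mpr ⟨i, this⟩
      simp only [hedef]
      exact_mod_cast this
    have hmemF1 : ∀ i, i ∈ F1 ↔ π < a i := by
      intro i; rw [hF1]; simp
    have hmemE : ∀ i, i ∈ E ↔ a i = π := by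
      intro i; rw [hE]; simp
    have hδF1 : ∀ i ∈ F1, δ i = 1 := by
      intro i hi
      rw [hδdef]; simp only
      rw [if_pos ((hmemF1 i).mp hi)]
    have hδE : ∀ i ∈ E, δ i = t / e := by
      intro i hi
      have h2 := (hmemE i).mp hi
      rw [hδdef]; simp only
      rw [if_neg (by rw [h2]; exact lt_irrefl _), if_pos h2]
    refine ⟨π, hπpos.le, Or.inr ⟨hπa.choose, hπa.choose_spec.symm, hπpos⟩, δ, ?_, ?_, ?_⟩
    · intro i
      rw [hδdef]; simp only
      by_cases h1 : π < a i
      · rw [if_pos h1]; norm_num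
      · rw [if_neg h1]
        by_cases h2 : a i = π
        · have he := hEpos i h2
          rw [if_pos h2]
          constructor
          · exact div_nonneg ht0 he.le
          · rw [div_le_one he]; exact hte
        · rw [if_neg h2]; norm_num
    · -- sum δ = Γ
      have hzero : ∀ i ∈ Finset.univ, i ∉ F1 ∪ E → δ i = 0 := by
        intro i _ hi
        rw [Finset.mem_union, hmemF1, hmemE, not_or] at hi
        rw [hδdef]; simp only
        rw [if_neg hi.1, if_neg hi.2]
      have hsum : ∑ i, δ i = ∑ i ∈ F1 ∪ E, δ i :=
        (Finset.sum_subset (Finset.subset_univ _) hzero).symm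
      rw [hsum, Finset.sum_union hdisj]
      have hs1 : ∑ i ∈ F1, δ i = (F1.card : ℝ) := by
        rw [Finset.sum_congr rfl hδF1, Finset.sum_const, nsmul_eq_mul, mul_one]
      have hs2 : ∑ i ∈ E, δ i = e * (t / e) := by
        rw [Finset.sum_congr rfl hδE, Finset.sum_const, nsmul_eq_mul, hedef]
      rw [hs1, hs2, hett, htdef]
      ring_nf
      exact le_refl Γ
    · -- objective equality
      have hzero : ∀ i ∈ Finset.univ, i ∉ F1 ∪ E → a i * δ i = 0 := by
        intro i _ hi
        rw [Finset.mem_union, hmemF1, hmemE, not_or] at hi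
        rw [hδdef]; simp only
        rw [if_neg hi.1, if_neg hi.2, mul_zero]
      have hsum : ∑ i, a i * δ i = ∑ i ∈ F1 ∪ E, a i * δ i :=
        (Finset.sum_subset (Finset.subset_univ _) hzero).symm
      have hs1 : ∑ i ∈ F1, a i * δ i = ∑ i ∈ F1, a i :=
        Finset.sum_congr rfl (fun i hi => by rw [hδF1 i hi, mul_one])
      have hs2 : ∑ i ∈ E, a i * δ i = π * (e * (t / e)) := by
        have : ∀ i ∈ E, a i * δ i = π * (t / e) := by
          intro i hi
          rw [hδE i hi, (hmemE i).mp hi]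
        rw [Finset.sum_congr rfl this, Finset.sum_const, nsmul_eq_mul, hedef]
        ring
      have hmax : ∑ i, max (a i - π) 0 = ∑ i ∈ F1, (a i - π) := by
        rw [← Finset.sum_subset (Finset.subset_univ F1) (fun i _ hi => ?_)]
        · refine Finset.sum_congr rfl (fun i hi => ?_)
          have := (hmemF1 i).mp hi
          rw [max_eq_left (by linarith)]
        · have : ¬ π < a i := fun h => hi ((hmemF1 i).mpr h)
          rw [max_eq_right (by linarith [not_lt.mp this])]
      rw [hsum, Finset.sum_union hdisj, hs1, hs2, hett, hmax, Finset.sum_sub_distrib,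
        Finset.sum_const, nsmul_eq_mul, htdef]
      ring


lemma main_aux (n : ℕ) (C : ℝ) (a : Fin n → ℝ) (ha : ∀ i, 0 ≤ a i)
    (Γ : ℝ) (hΓ0 : 0 ≤ Γ) :
    sSup {v : ℝ | ∃ δ : Fin n → ℝ, (∀ i, 0 ≤ δ i ∧ δ i ≤ 1) ∧ (∑ i, δ i) ≤ Γ ∧
        v = C + ∑ i, a i * δ i}
      = sInf {w : ℝ | ∃ π : ℝ, 0 ≤ π ∧ w = C + Γ * π + ∑ i, max (a i - π) 0}
    ∧ ∃ π : ℝ, (π = 0 ∨ ∃ i, π = a i ∧ 0 < π) ∧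
        sSup {v : ℝ | ∃ δ : Fin n → ℝ, (∀ i, 0 ≤ δ i ∧ δ i ≤ 1) ∧ (∑ i, δ i) ≤ Γ ∧
            v = C + ∑ i, a i * δ i}
          = C + Γ * π + ∑ i, max (a i - π) 0 := by
  set Vs : Set ℝ := {v : ℝ | ∃ δ : Fin n → ℝ, (∀ i, 0 ≤ δ i ∧ δ i ≤ 1) ∧ (∑ i, δ i) ≤ Γ ∧
      v = C + ∑ i, a i * δ i} with hVs
  set Ws : Set ℝ := {w : ℝ | ∃ π : ℝ, 0 ≤ π ∧ w = C + Γ * π + ∑ i, max (a i - π) 0} with hWs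
  have hvw : ∀ v ∈ Vs, ∀ w ∈ Ws, v ≤ w := by
    rintro v ⟨δ, hb, hs, rfl⟩ w ⟨π, hπ, rfl⟩
    have := weak_dual n a ha Γ δ hb hs π hπ
    linarith
  have hVne : Vs.Nonempty := by
    refine ⟨C, fun _ => 0, fun i => by norm_num, by simpa using hΓ0, by simp⟩
  have hWne : Ws.Nonempty := ⟨C + Γ * 0 + ∑ i, max (a i - 0) 0, 0, le_refl 0, rfl⟩
  obtain ⟨π, hπ0, hπform, δ, hδb, hδs, heq⟩ := strong_dual n a ha Γ hΓ0
  have hvmem : C + ∑ i, a i * δ i ∈ Vs := ⟨δ, hδb, hδs, rfl⟩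
  have hwmem : C + Γ * π + ∑ i, max (a i - π) 0 ∈ Ws := ⟨π, hπ0, rfl⟩
  have hvweq : C + ∑ i, a i * δ i = C + Γ * π + ∑ i, max (a i - π) 0 := by
    rw [heq]; ring
  have hbddA : BddAbove Vs := ⟨C + Γ * 0 + ∑ i, max (a i - 0) 0,
    fun v hv => hvw v hv _ ⟨0, le_refl 0, rfl⟩⟩
  have hbddB : BddBelow Ws := ⟨C + ∑ i, a i * δ i, fun w hw => hvw _ hvmem w hw⟩
  have h1 : sSup Vs ≤ sInf Ws :=
    csSup_le hVne fun v hv => le_csInf hWne fun w hw => hvw v hv w hw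
  have h2 : sSup Vs = C + Γ * π + ∑ i, max (a i - π) 0 := by
    refine le_antisymm (le_trans h1 (csInf_le hbddB hwmem)) ?_
    rw [← hvweq]
    exact le_csSup hbddA hvmem
  refine ⟨le_antisymm h1 ?_, π, hπform, h2⟩
  calc sInf Ws ≤ C + Γ * π + ∑ i, max (a i - π) 0 := csInf_le hbddB hwmem
    _ = sSup Vs := h2.symm

/-- For continuous budgeted uncertainty, the worst case for fixed `x` equals the
minimum over `π ≥ 0` of `∑ c̲ᵢxᵢ + Γπ + ∑ [dᵢxᵢ − π]₊`, attained at some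
`π ∈ {0} ∪ {dᵢ : i ∈ [n]}`. -/
theorem stmt_4 (n : ℕ) (cl d : Fin n → ℝ) (hcl : ∀ i, 0 ≤ cl i) (hd : ∀ i, 0 ≤ d i)
    (Γ : ℝ) (hΓ0 : 0 ≤ Γ) (hΓn : Γ ≤ n) (S : Finset (Fin n)) :
    sSup {v : ℝ | ∃ δ : Fin n → ℝ, (∀ i, 0 ≤ δ i ∧ δ i ≤ 1) ∧ (∑ i, δ i) ≤ Γ ∧
        v = ∑ i ∈ S, (cl i + d i * δ i)}
      = sInf {w : ℝ | ∃ π : ℝ, 0 ≤ π ∧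
          w = ∑ i ∈ S, cl i + Γ * π + ∑ i, max ((if i ∈ S then d i else 0) - π) 0}
    ∧ ∃ π : ℝ, (π = 0 ∨ ∃ i, π = d i) ∧
        sSup {v : ℝ | ∃ δ : Fin n → ℝ, (∀ i, 0 ≤ δ i ∧ δ i ≤ 1) ∧ (∑ i, δ i) ≤ Γ ∧
            v = ∑ i ∈ S, (cl i + d i * δ i)}
          = ∑ i ∈ S, cl i + Γ * π + ∑ i, max ((if i ∈ S then d i else 0) - π) 0 := by
  classical
  have ha : ∀ i, (0:ℝ) ≤ if i ∈ S then d i else 0 := by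
    intro i; split
    · exact hd i
    · exact le_refl 0
  have hrw : ∀ δ : Fin n → ℝ, ∑ i ∈ S, (cl i + d i * δ i)
      = (∑ i ∈ S, cl i) + ∑ i, (if i ∈ S then d i else 0) * δ i := by
    intro δ
    rw [Finset.sum_add_distrib]
    congr 1
    have : ∀ i : Fin n, (if i ∈ S then d i else 0) * δ i
        = if i ∈ S then d i * δ i else 0 := by
      intro i; split <;> simp
    rw [Finset.sum_congr rfl (fun i _ => this i), Finset.sum_ite_mem,
      Finset.univ_inter]
  have hseteq : {v : ℝ | ∃ δ : Fin n → ℝ, (∀ i, 0 ≤ δ i ∧ δ i ≤ 1) ∧ (∑ i, δ i) ≤ Γ ∧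
      v = ∑ i ∈ S, (cl i + d i * δ i)}
      = {v : ℝ | ∃ δ : Fin n → ℝ, (∀ i, 0 ≤ δ i ∧ δ i ≤ 1) ∧ (∑ i, δ i) ≤ Γ ∧
      v = (∑ i ∈ S, cl i) + ∑ i, (if i ∈ S then d i else 0) * δ i} := by
    ext v
    simp only [Set.mem_setOf_eq, hrw]
  rw [hseteq]
  obtain ⟨h1, π, hform, h2⟩ := main_aux n (∑ i ∈ S, cl i)
    (fun i => if i ∈ S then d i else 0) ha Γ hΓ0
  refine ⟨h1, π, ?_, h2⟩
  rcases hform with h | ⟨i, hi, hpos⟩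
  · exact Or.inl h
  · by_cases hmem : i ∈ S
    · rw [if_pos hmem] at hi; exact Or.inr ⟨i, hi⟩
    · rw [if_neg hmem] at hi; exact absurd (hi ▸ hpos) (lt_irrefl 0)
end

section
/- The robust min-max selection problem under continuous budgeted uncertainty decomposes into finitely many nominal selection problems: min_{x∈X} max_{c∈U_B^Γ} c^T x = min_{k∈[K]} min_{x∈X} ( ∑_i c̲_i x_i + Γ π^k + ∑_i [d_i − π^k]_+ x_i ), where {π^1,…,π^K} = {0} ∪ {d_i : i∈[n]}. -/
/-- Auxiliary: from any finite set `S` with more than `k` elements, select a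
`k`-element subset `T` of "largest" `d`-values together with a critical
element `j₀` of maximal `d`-value among the rest. -/
lemma stmt_5_sel_top {n : ℕ} (d : Fin n → ℝ) :
    ∀ (k : ℕ) (S : Finset (Fin n)), k < S.card →
      ∃ T ⊆ S, T.card = k ∧ ∃ j₀ ∈ S, j₀ ∉ T ∧
        (∀ i ∈ T, d j₀ ≤ d i) ∧ ∀ j ∈ S, j ∉ T → d j ≤ d j₀ := by
  intro k
  induction k with
  | zero =>
    intro S hS
    obtain ⟨j₀, hj₀S, hj₀⟩ := S.exists_max_image d (Finset.card_pos.mp hS)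
    exact ⟨∅, Finset.empty_subset _, rfl, j₀, hj₀S, Finset.notMem_empty _,
      fun i hi => absurd hi (Finset.notMem_empty _), fun j hj _ => hj₀ j hj⟩
  | succ k ih =>
    intro S hS
    obtain ⟨j₀, hj₀S, hj₀⟩ := S.exists_max_image d (Finset.card_pos.mp (by omega))
    have hk : k < (S.erase j₀).card := by
      rw [Finset.card_erase_of_mem hj₀S]; omega
    obtain ⟨T', hT'sub, hT'card, j₁, hj₁, hj₁T', hup, hdown⟩ := ih (S.erase j₀) hk
    have hj₀T' : j₀ ∉ T' := fun h => (Finset.mem_erase.mp (hT'sub h)).1 rfl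
    refine ⟨insert j₀ T', ?_, ?_, j₁, (Finset.mem_erase.mp hj₁).2, ?_, ?_, ?_⟩
    · exact Finset.insert_subset hj₀S (hT'sub.trans (Finset.erase_subset _ _))
    · rw [Finset.card_insert_of_notMem hj₀T', hT'card]
    · intro h
      rcases Finset.mem_insert.mp h with h | h
      · exact (Finset.mem_erase.mp hj₁).1 h
      · exact hj₁T' h
    · intro i hi
      rcases Finset.mem_insert.mp hi with rfl | hi
      · exact hj₀ j₁ (Finset.mem_erase.mp hj₁).2
      · exact hup i hi
    · intro j hjS hjT
      have hjne : j ≠ j₀ := fun h => hjT (h ▸ Finset.mem_insert_self _ _)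
      exact hdown j (Finset.mem_erase.mpr ⟨hjne, hjS⟩)
        (fun h => hjT (Finset.mem_insert_of_mem h))

/-- The robust min-max selection problem under continuous budgeted uncertainty
decomposes into finitely many nominal selection problems, one per
`π ∈ {0} ∪ {dᵢ}`. -/
theorem stmt_5 (n p : ℕ) (hp : p ≤ n) (cl d : Fin n → ℝ)
    (hcl : ∀ i, 0 ≤ cl i) (hd : ∀ i, 0 ≤ d i)
    (Γ : ℝ) (hΓ0 : 0 ≤ Γ) (hΓn : Γ ≤ n) :
    sInf {v : ℝ | ∃ S : Finset (Fin n), S.card = p ∧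
        v = sSup {u : ℝ | ∃ δ : Fin n → ℝ, (∀ i, 0 ≤ δ i ∧ δ i ≤ 1) ∧
          (∑ i, δ i) ≤ Γ ∧ u = ∑ i ∈ S, (cl i + d i * δ i)}}
      = sInf {v : ℝ | ∃ π ∈ insert (0 : ℝ) (Finset.image d Finset.univ),
          ∃ S : Finset (Fin n), S.card = p ∧
            v = ∑ i ∈ S, cl i + Γ * π + ∑ i ∈ S, max (d i - π) 0} := by
  set U : Finset (Fin n) → Set ℝ := fun S =>
    {u : ℝ | ∃ δ : Fin n → ℝ, (∀ i, 0 ≤ δ i ∧ δ i ≤ 1) ∧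
      (∑ i, δ i) ≤ Γ ∧ u = ∑ i ∈ S, (cl i + d i * δ i)} with hU
  -- basic facts about the inner sets
  have hUne : ∀ S : Finset (Fin n), (∑ i ∈ S, cl i) ∈ U S := by
    intro S
    exact ⟨fun _ => 0, fun i => ⟨le_refl 0, zero_le_one⟩, by simpa using hΓ0, by simp⟩
  have hUbdd : ∀ S : Finset (Fin n), BddAbove (U S) := by
    intro S
    refine ⟨∑ i ∈ S, (cl i + d i), ?_⟩
    rintro u ⟨δ, hδ, hδΓ, rfl⟩
    refine Finset.sum_le_sum fun i _ => ?_
    have := (hδ i).1; have := (hδ i).2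
    nlinarith [hd i]
  -- weak duality
  have weak : ∀ (S : Finset (Fin n)) (π : ℝ), 0 ≤ π → ∀ δ : Fin n → ℝ,
      (∀ i, 0 ≤ δ i ∧ δ i ≤ 1) → (∑ i, δ i) ≤ Γ →
      ∑ i ∈ S, (cl i + d i * δ i)
        ≤ ∑ i ∈ S, cl i + Γ * π + ∑ i ∈ S, max (d i - π) 0 := by
    intro S π hπ δ hδ hδΓ
    have h2 : ∑ i ∈ S, d i * δ i ≤ Γ * π + ∑ i ∈ S, max (d i - π) 0 := by
      have hsum : ∑ i ∈ S, δ i ≤ Γ :=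
        le_trans (Finset.sum_le_sum_of_subset_of_nonneg (Finset.subset_univ S)
          (fun i _ _ => (hδ i).1)) hδΓ
      calc ∑ i ∈ S, d i * δ i ≤ ∑ i ∈ S, (π * δ i + max (d i - π) 0) := by
            refine Finset.sum_le_sum fun i _ => ?_
            have h0 := (hδ i).1; have h1 := (hδ i).2
            nlinarith [le_max_left (d i - π) (0:ℝ), le_max_right (d i - π) (0:ℝ)]
        _ = π * ∑ i ∈ S, δ i + ∑ i ∈ S, max (d i - π) 0 := by
            rw [Finset.sum_add_distrib, Finset.mul_sum]
        _ ≤ π * Γ + ∑ i ∈ S, max (d i - π) 0 := by gcongr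
        _ = Γ * π + ∑ i ∈ S, max (d i - π) 0 := by ring
    rw [Finset.sum_add_distrib]
    linarith
  -- strong duality
  have strong : ∀ S : Finset (Fin n), S.card = p →
      ∃ π ∈ insert (0:ℝ) (Finset.image d Finset.univ), ∃ δ : Fin n → ℝ,
        (∀ i, 0 ≤ δ i ∧ δ i ≤ 1) ∧ (∑ i, δ i) ≤ Γ ∧
        ∑ i ∈ S, cl i + Γ * π + ∑ i ∈ S, max (d i - π) 0
          = ∑ i ∈ S, (cl i + d i * δ i) := by
    intro S hS
    by_cases hcase : (p : ℝ) ≤ Γ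
    · refine ⟨0, Finset.mem_insert_self _ _,
        fun i => if i ∈ S then 1 else 0, ?_, ?_, ?_⟩
      · intro i; by_cases h : i ∈ S <;> simp [h]
      · have : (∑ i, if i ∈ S then (1:ℝ) else 0) = S.card := by
          simp [Finset.sum_ite_mem]
        rw [this, hS]; exact hcase
      · have h1 : ∑ i ∈ S, max (d i - 0) 0 = ∑ i ∈ S, d i :=
          Finset.sum_congr rfl fun i _ => by simp [hd i]
        have h2 : ∑ i ∈ S, (cl i + d i * (if i ∈ S then 1 else 0))
            = ∑ i ∈ S, (cl i + d i) :=
          Finset.sum_congr rfl fun i hi => by simp [hi]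
        rw [h1, h2, Finset.sum_add_distrib]; ring
    · push_neg at hcase
      set k := ⌊Γ⌋₊ with hkdef
      have hkΓ : (k:ℝ) ≤ Γ := Nat.floor_le hΓ0
      have hΓk1 : Γ < (k:ℝ) + 1 := Nat.lt_floor_add_one Γ
      have hkp : k < S.card := by
        rw [hS]; exact_mod_cast lt_of_le_of_lt hkΓ hcase
      obtain ⟨T, hTS, hTcard, j₀, hj₀S, hj₀T, hup, hdown⟩ := stmt_5_sel_top d k S hkp
      refine ⟨d j₀,
        Finset.mem_insert_of_mem (Finset.mem_image_of_mem d (Finset.mem_univ _)),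
        fun i => (if i ∈ T then (1:ℝ) else 0) + (if i = j₀ then Γ - k else 0),
        ?_, ?_, ?_⟩
      · intro i
        by_cases hij : i = j₀
        · subst hij
          simp [hj₀T]
          constructor <;> linarith
        · by_cases hiT : i ∈ T <;> simp [hiT, hij] <;> norm_num
      · have h1 : (∑ i, if i ∈ T then (1:ℝ) else 0) = T.card := by
          simp [Finset.sum_ite_mem]
        have h2 : (∑ i, if i = j₀ then Γ - (k:ℝ) else 0) = Γ - k := by
          rw [Finset.sum_ite_eq' Finset.univ j₀ (fun _ => Γ - (k:ℝ))]
          simp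
        rw [Finset.sum_add_distrib, h1, h2, hTcard]; linarith
      · -- the two values agree
        have hmax : ∑ i ∈ S, max (d i - d j₀) 0
            = ∑ i ∈ T, d i - k * d j₀ := by
          rw [← Finset.sum_sdiff hTS]
          have hz : ∑ i ∈ S \ T, max (d i - d j₀) 0 = 0 := by
            refine Finset.sum_eq_zero fun i hi => ?_
            have := Finset.mem_sdiff.mp hi
            have := hdown i this.1 this.2
            simp [max_eq_right]; linarith
          have hT : ∑ i ∈ T, max (d i - d j₀) 0 = ∑ i ∈ T, (d i - d j₀) := by
            refine Finset.sum_congr rfl fun i hi => ?_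
            have := hup i hi
            exact max_eq_left (by linarith)
          rw [hz, hT, Finset.sum_sub_distrib, Finset.sum_const, hTcard]
          push_cast; ring
        have hsum : ∑ i ∈ S, d i *
            ((if i ∈ T then (1:ℝ) else 0) + (if i = j₀ then Γ - k else 0))
            = ∑ i ∈ T, d i + (Γ - k) * d j₀ := by
          have : ∀ i ∈ S, d i *
              ((if i ∈ T then (1:ℝ) else 0) + (if i = j₀ then Γ - k else 0))
              = (if i ∈ T then d i else 0) + (if i = j₀ then (Γ - k) * d i else 0) := by
            intro i _
            by_cases hij : i = j₀
            · subst hij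
              simp [hj₀T]
              ring
            · by_cases hiT : i ∈ T <;> simp [hiT, hij]
          rw [Finset.sum_congr rfl this, Finset.sum_add_distrib]
          congr 1
          · rw [Finset.sum_ite_mem, Finset.inter_eq_right.mpr hTS]
          · rw [Finset.sum_ite_eq' S j₀ (fun i => (Γ - (k:ℝ)) * d i)]
            simp [hj₀S]
        rw [Finset.sum_add_distrib, hmax, hsum]
        ring
    -- end strong
  -- nonemptiness and lower bounds of the two outer sets
  obtain ⟨S₀, _, hS₀⟩ := Finset.exists_subset_card_eq
    (s := (Finset.univ : Finset (Fin n))) (n := p) (by simpa using hp)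
  have hAne : {v : ℝ | ∃ S : Finset (Fin n), S.card = p ∧ v = sSup (U S)}.Nonempty :=
    ⟨sSup (U S₀), S₀, hS₀, rfl⟩
  have hBne : {v : ℝ | ∃ π ∈ insert (0 : ℝ) (Finset.image d Finset.univ),
      ∃ S : Finset (Fin n), S.card = p ∧
        v = ∑ i ∈ S, cl i + Γ * π + ∑ i ∈ S, max (d i - π) 0}.Nonempty :=
    ⟨_, 0, Finset.mem_insert_self _ _, S₀, hS₀, rfl⟩
  have hπ0 : ∀ π ∈ insert (0 : ℝ) (Finset.image d Finset.univ), 0 ≤ π := by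
    intro π hπ
    rcases Finset.mem_insert.mp hπ with rfl | h
    · exact le_refl 0
    · obtain ⟨i, _, rfl⟩ := Finset.mem_image.mp h
      exact hd i
  have hAbdd : BddBelow {v : ℝ | ∃ S : Finset (Fin n), S.card = p ∧ v = sSup (U S)} := by
    refine ⟨0, ?_⟩
    rintro v ⟨S, hScard, rfl⟩
    refine le_trans ?_ (le_csSup (hUbdd S) (hUne S))
    exact Finset.sum_nonneg fun i _ => hcl i
  have hBbdd : BddBelow {v : ℝ | ∃ π ∈ insert (0 : ℝ) (Finset.image d Finset.univ),
      ∃ S : Finset (Fin n), S.card = p ∧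
        v = ∑ i ∈ S, cl i + Γ * π + ∑ i ∈ S, max (d i - π) 0} := by
    refine ⟨0, ?_⟩
    rintro v ⟨π, hπ, S, hScard, rfl⟩
    have h1 : 0 ≤ ∑ i ∈ S, cl i := Finset.sum_nonneg fun i _ => hcl i
    have h2 : 0 ≤ ∑ i ∈ S, max (d i - π) 0 :=
      Finset.sum_nonneg fun i _ => le_max_right _ _
    have := hπ0 π hπ
    nlinarith
  apply le_antisymm
  · apply le_csInf hBne
    rintro b ⟨π, hπ, S, hScard, rfl⟩
    refine le_trans (csInf_le hAbdd ⟨S, hScard, rfl⟩) ?_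
    refine csSup_le ⟨_, hUne S⟩ ?_
    rintro u ⟨δ, hδ, hδΓ, rfl⟩
    exact weak S π (hπ0 π hπ) δ hδ hδΓ
  · apply le_csInf hAne
    rintro a ⟨S, hScard, rfl⟩
    obtain ⟨π, hπ, δ, hδ, hδΓ, heq⟩ := strong S hScard
    refine le_trans (csInf_le hBbdd ⟨π, hπ, S, hScard, rfl⟩) ?_
    rw [heq]
    exact le_csSup (hUbdd S) ⟨δ, hδ, hδΓ, rfl⟩
end

section
/- For the two-stage selection problem with a single scenario c, the optimal value equals the value of a nominal selection problem with costs min{C_i, c_i}: min_{x∈X'} (C^T x + min_{y∈X(x)} c^T y) = min_{z∈X} ∑_i min{C_i, c_i} z_i, where X = {z ∈ {0,1}^n : ∑_i z_i = p}. -/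
/-!
Choosing `S` in the first stage and completing it by `T` in the second costs
`∑_S C + ∑_T c ≥ ∑_{S ∪ T} min (C, c)`, and conversely any `p`-set `Z` is realised at cost
`∑_Z min (C, c)` by buying in the first stage exactly the items of `Z` with `Cᵢ ≤ cᵢ`.
So every value of either problem is dominated by a value of the other, and the infima agree.
-/

open Finset

section

variable {α : Type*}

section

variable {β : Type*} [AddCommMonoid β] [LinearOrder β]

theorem sum_min_eq_sum_filter_add_sum_filter_not (C c : α → β) (Z : Finset α) :
    ∑ i ∈ Z, min (C i) (c i) =
      ∑ i ∈ Z with C i ≤ c i, C i + ∑ i ∈ Z with ¬ C i ≤ c i, c i := by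
  rw [← sum_filter_add_sum_filter_not Z (fun i ↦ C i ≤ c i)]
  congr 1
  · exact sum_congr rfl fun i hi ↦ min_eq_left (mem_filter.1 hi).2
  · exact sum_congr rfl fun i hi ↦ min_eq_right (le_of_not_ge (mem_filter.1 hi).2)

theorem sum_min_le_sum_add_sum [IsOrderedAddMonoid β] [DecidableEq α] (C c : α → β)
    {S T : Finset α} (hST : Disjoint S T) :
    ∑ i ∈ S ∪ T, min (C i) (c i) ≤ ∑ i ∈ S, C i + ∑ i ∈ T, c i := by
  rw [sum_union hST]
  exact add_le_add (sum_le_sum fun i _ ↦ min_le_left _ _) (sum_le_sum fun i _ ↦ min_le_right _ _)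

end

variable [DecidableEq α]

/-- The values `cᵀy` of the second-stage completions `y ∈ X(x)`, with the 0/1 vectors `x`, `y`
encoded by their supports `S`, `T`. -/
def secondStageCosts (c : α → ℝ) (p : ℕ) (S : Finset α) : Set ℝ :=
  {u | ∃ T : Finset α, Disjoint S T ∧ #(S ∪ T) = p ∧ u = ∑ i ∈ T, c i}

theorem secondStageCosts_finite [Finite α] (c : α → ℝ) (p : ℕ) (S : Finset α) :
    (secondStageCosts c p S).Finite :=
  (Set.finite_range fun T ↦ ∑ i ∈ T, c i).subset (by rintro _ ⟨T, -, -, rfl⟩; exact ⟨T, rfl⟩)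

theorem Finset.exists_disjoint_card_union_eq [Fintype α] {S : Finset α} {p : ℕ}
    (hS : #S ≤ p) (hp : p ≤ Fintype.card α) : ∃ T, Disjoint S T ∧ #(S ∪ T) = p := by
  obtain ⟨T, hTS, hT⟩ := exists_subset_card_eq (s := Sᶜ) (n := p - #S)
    (by rw [card_compl]; omega)
  have hST : Disjoint S T := disjoint_compl_right.mono_right hTS
  exact ⟨T, hST, by rw [card_union_of_disjoint hST, hT]; omega⟩

theorem exists_sum_eq_csInf_secondStageCosts [Fintype α] (c : α → ℝ) {S : Finset α} {p : ℕ}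
    (hS : #S ≤ p) (hp : p ≤ Fintype.card α) :
    ∃ T, Disjoint S T ∧ #(S ∪ T) = p ∧ ∑ i ∈ T, c i = sInf (secondStageCosts c p S) := by
  obtain ⟨T, hST, hT⟩ := exists_disjoint_card_union_eq hS hp
  have hne : (secondStageCosts c p S).Nonempty := ⟨_, T, hST, hT, rfl⟩
  obtain ⟨T', hST', hT', hval⟩ := hne.csInf_mem (secondStageCosts_finite c p S)
  exact ⟨T', hST', hT', hval.symm⟩

end

theorem stmt_8_general (n p : ℕ) (hp : p ≤ n) (C c : Fin n → ℝ) :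
    sInf {v : ℝ | ∃ S : Finset (Fin n), S.card ≤ p ∧
        v = ∑ i ∈ S, C i + sInf {u : ℝ | ∃ T : Finset (Fin n),
          Disjoint S T ∧ (S ∪ T).card = p ∧ u = ∑ i ∈ T, c i}}
      = sInf {v : ℝ | ∃ Z : Finset (Fin n), Z.card = p ∧
          v = ∑ i ∈ Z, min (C i) (c i)} := by
  apply csInf_eq_csInf_of_forall_exists_le
  · rintro _ ⟨S, hS, rfl⟩
    obtain ⟨T, hST, hcard, hT⟩ :=
      exists_sum_eq_csInf_secondStageCosts c hS (by rwa [Fintype.card_fin])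
    exact ⟨_, ⟨S ∪ T, hcard, rfl⟩, hT ▸ sum_min_le_sum_add_sum C c hST⟩
  · rintro _ ⟨Z, hZ, rfl⟩
    set S := Z.filter fun i ↦ C i ≤ c i
    set T := Z.filter fun i ↦ ¬ C i ≤ c i
    have hST : Disjoint S T := disjoint_filter_filter_not Z Z _
    have hcard : #(S ∪ T) = p := by rw [filter_union_filter_not_eq, hZ]
    have hT : ∑ i ∈ T, c i ∈ secondStageCosts c p S := ⟨T, hST, hcard, rfl⟩
    refine ⟨_, ⟨S, (card_filter_le _ _).trans hZ.le, rfl⟩, ?_⟩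
    rw [sum_min_eq_sum_filter_add_sum_filter_not]
    exact add_le_add_right
      (csInf_le (secondStageCosts_finite c p S).bddBelow hT) _

/-- The two-stage selection problem with a single scenario equals a nominal
selection problem with costs `min{Cᵢ, cᵢ}`. -/
theorem stmt_8 (n p : ℕ) (hp : p ≤ n) (C c : Fin n → ℝ)
    (hC : ∀ i, 0 ≤ C i) (hc : ∀ i, 0 ≤ c i) :
    sInf {v : ℝ | ∃ S : Finset (Fin n), S.card ≤ p ∧
        v = ∑ i ∈ S, C i + sInf {u : ℝ | ∃ T : Finset (Fin n),
          Disjoint S T ∧ (S ∪ T).card = p ∧ u = ∑ i ∈ T, c i}}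
      = sInf {v : ℝ | ∃ Z : Finset (Fin n), Z.card = p ∧
          v = ∑ i ∈ Z, min (C i) (c i)} :=
  stmt_8_general n p hp C c
end
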